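/- arXiv:1502.07425 — 3 statements merged into one kernel-verified Lean document; each statement's English description precedes it below -/
import Mathlib

section
/- Consider a two-tier network where tier j ∈ {1,2} has nearest-BS distance Z_j, with Z_1, Z_2 independent and P(Z_j > z) = exp(−πλ_j z²) for intensities λ_1, λ_2 > 0. Suppose both tiers have the same path loss exponent α > 2, powers P_1, P_2 > 0, and biases B_1 = 1, B_2 = B > 1. Then the probability that the user associates with tier 1, i.e., P(P_1 Z_1^{−α} ≥ B P_2 Z_2^{−α}), equals λ_1 / (λ_1 + λ_2 (B P_2 / P_1)^{2/α}). -/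
/-!
Both tiers share the exponent `α`, so on the almost sure event `Z₁, Z₂ > 0` the user joins
tier 1 exactly when `Z₁ ≤ c Z₂` with `c = (B P₂ / P₁)^(-1/α)`. Conditioning on `Z₂` (independence)
gives `P(Z₁ ≤ c Z₂) = E[1 - exp(-π λ₁ c² Z₂²)]`, and for a Rayleigh variable the layer-cake
formula gives `E[1 - exp(-a Z²)] = ∫₀^∞ 2at e^{-at²} P(Z > t) dt = a / (a + π λ)`.
-/

open MeasureTheory ProbabilityTheory Real Set

theorem integral_Ioi_mul_exp_neg_mul_sq {b : ℝ} (hb : 0 < b) :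
    ∫ t in Ioi (0 : ℝ), t * exp (-b * t ^ 2) = (2 * b)⁻¹ := by
  apply Complex.ofReal_injective
  rw [← integral_complex_ofReal]
  push_cast
  exact integral_mul_cexp_neg_mul_sq (by simpa using hb)

theorem intervalIntegral.integral_two_mul_mul_exp_neg_mul_sq {a : ℝ} (x : ℝ) :
    ∫ t in (0 : ℝ)..x, 2 * a * t * exp (-a * t ^ 2) = 1 - exp (-a * x ^ 2) := by
  have hderiv : ∀ t, HasDerivAt (fun t => -exp (-a * t ^ 2)) (2 * a * t * exp (-a * t ^ 2)) t := by
    intro t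
    refine (((hasDerivAt_pow 2 t).const_mul (-a)).exp.fun_neg).congr_deriv ?_
    push_cast
    ring
  rw [intervalIntegral.integral_eq_sub_of_hasDerivAt (fun t _ => hderiv t)
    (by apply Continuous.intervalIntegrable; fun_prop)]
  simp only [ne_eq, OfNat.ofNat_ne_zero, not_false_eq_true, zero_pow, mul_zero, exp_zero]
  ring

theorem mul_rpow_neg_le_mul_rpow_neg_iff {p q x y α : ℝ} (hp : 0 < p) (hq : 0 < q) (hx : 0 < x)
    (hy : 0 < y) (hα : 0 < α) :
    q * y ^ (-α) ≤ p * x ^ (-α) ↔ x ≤ (q / p) ^ (-α⁻¹) * y := by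
  rw [← div_le_iff₀' hp, mul_div_right_comm, ← le_div_iff₀ (by positivity), ← div_rpow hx.le hy.le,
    ← div_le_iff₀ hy, neg_inv, le_rpow_inv_iff_of_neg (by positivity) (by positivity) (by linarith)]

theorem ProbabilityTheory.IndepFun.measure_preimage_eq_lintegral {Ω β γ : Type*}
    [MeasurableSpace Ω] [MeasurableSpace β] [MeasurableSpace γ] {μ : Measure Ω}
    [IsFiniteMeasure μ] {X : Ω → β} {Y : Ω → γ}
    (h : IndepFun X Y μ) (hX : Measurable X) (hY : Measurable Y) {s : Set (β × γ)}
    (hs : MeasurableSet s) :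
    μ ((fun ω => (X ω, Y ω)) ⁻¹' s) = ∫⁻ ω, μ (X ⁻¹' {x | (x, Y ω) ∈ s}) ∂μ := by
  rw [← Measure.map_apply (hX.prodMk hY) hs,
    (indepFun_iff_map_prod_eq_prod_map_map hX.aemeasurable hY.aemeasurable).mp h,
    Measure.prod_apply_symm hs, lintegral_map _ hY]
  · congr with ω
    exact Measure.map_apply hX (measurable_prodMk_right hs)
  · exact measurable_measure_prodMk_right hs

/-- The tail of the distance to the nearest point of a planar Poisson process of intensity
`lam`. -/
def HasRayleighTail {Ω : Type*} [MeasurableSpace Ω] (μ : Measure Ω) (Z : Ω → ℝ) (lam : ℝ) :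
    Prop :=
  ∀ z ≥ (0 : ℝ), μ {ω | Z ω > z} = ENNReal.ofReal (exp (-(π * lam * z ^ 2)))

namespace HasRayleighTail

variable {Ω : Type*} [MeasurableSpace Ω] {μ : Measure Ω} [IsProbabilityMeasure μ]
  {Z : Ω → ℝ} {lam : ℝ}

theorem measure_le (hZ : HasRayleighTail μ Z lam) (hm : Measurable Z) {z : ℝ} (hz : 0 ≤ z) :
    μ {ω | Z ω ≤ z} = ENNReal.ofReal (1 - exp (-(π * lam * z ^ 2))) := by
  rw [show {ω | Z ω ≤ z} = {ω | Z ω > z}ᶜ by ext; simp,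
    prob_compl_eq_one_sub (measurableSet_lt measurable_const hm),
    hZ z hz, ← ENNReal.ofReal_one, ENNReal.ofReal_sub _ (exp_pos _).le]

theorem ae_pos (hZ : HasRayleighTail μ Z lam) (hm : Measurable Z) : ∀ᵐ ω ∂μ, 0 < Z ω := by
  simpa [ae_iff] using hZ.measure_le hm le_rfl

theorem lintegral_one_sub_exp_neg_mul_sq (hZ : HasRayleighTail μ Z lam) (hm : Measurable Z)
    (hlam : 0 ≤ lam) {a : ℝ} (ha : 0 < a) :
    ∫⁻ ω, ENNReal.ofReal (1 - exp (-a * Z ω ^ 2)) ∂μ = ENNReal.ofReal (a / (a + π * lam)) := by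
  have hb : 0 < a + π * lam := by positivity
  have hint : IntegrableOn (fun t => 2 * a * (t * exp (-(a + π * lam) * t ^ 2))) (Ioi 0) :=
    ((integrable_mul_exp_neg_mul_sq hb).const_mul _).integrableOn
  calc ∫⁻ ω, ENNReal.ofReal (1 - exp (-a * Z ω ^ 2)) ∂μ
      = ∫⁻ ω, ENNReal.ofReal (∫ t in (0 : ℝ)..Z ω, 2 * a * t * exp (-a * t ^ 2)) ∂μ := by
        simp_rw [intervalIntegral.integral_two_mul_mul_exp_neg_mul_sq]
    _ = ∫⁻ t in Ioi 0, μ {ω | t < Z ω} * ENNReal.ofReal (2 * a * t * exp (-a * t ^ 2)) := by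
        refine lintegral_comp_eq_lintegral_meas_lt_mul μ ((hZ.ae_pos hm).mono fun _ h => h.le)
          hm.aemeasurable (fun _ _ => (by fun_prop : Continuous _).intervalIntegrable _ _) ?_
        filter_upwards [ae_restrict_mem measurableSet_Ioi] with t (ht : 0 < t)
        positivity
    _ = ∫⁻ t in Ioi 0, ENNReal.ofReal (2 * a * (t * exp (-(a + π * lam) * t ^ 2))) := by
        refine setLIntegral_congr_fun measurableSet_Ioi fun t ht => ?_
        rw [hZ t (le_of_lt ht), ← ENNReal.ofReal_mul (exp_pos _).le, mul_comm, ← mul_assoc,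
          mul_assoc _ (exp _), ← exp_add]
        ring_nf
    _ = ENNReal.ofReal (∫ t in Ioi 0, 2 * a * (t * exp (-(a + π * lam) * t ^ 2))) := by
        refine (ofReal_integral_eq_lintegral_ofReal hint ?_).symm
        filter_upwards [ae_restrict_mem measurableSet_Ioi] with t (ht : 0 < t)
        positivity
    _ = ENNReal.ofReal (a / (a + π * lam)) := by
        rw [integral_const_mul, integral_Ioi_mul_exp_neg_mul_sq hb]
        field_simp

end HasRayleighTail

/-- **Tier-1 association probability.**
In a two-tier network where the nearest-BS distances `Z₁, Z₂` are independent with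
Rayleigh tails `P(Z_j > z) = exp(−π λ_j z²)` (`λ_j > 0`), equal path loss exponent
`α > 2`, powers `P₁, P₂ > 0`, and biases `B₁ = 1`, `B₂ = B > 1`, the probability
that the user associates with tier 1, i.e.
`P(P₁ Z₁^{−α} ≥ B P₂ Z₂^{−α})`, equals `λ₁ / (λ₁ + λ₂ (B P₂/P₁)^{2/α})`. -/
theorem tier1_association_probability
    {Ω : Type*} [MeasurableSpace Ω] (μ : Measure Ω) [IsProbabilityMeasure μ]
    (lam1 lam2 : ℝ) (hlam1 : 0 < lam1) (hlam2 : 0 < lam2)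
    (α : ℝ) (hα : 2 < α) (P1 P2 : ℝ) (hP1 : 0 < P1) (hP2 : 0 < P2)
    (B : ℝ) (hB : 1 < B)
    (Z1 Z2 : Ω → ℝ)
    (hZ1 : ∀ z ≥ (0:ℝ), μ {ω | Z1 ω > z} = ENNReal.ofReal (Real.exp (-(π * lam1 * z ^ 2))))
    (hZ2 : ∀ z ≥ (0:ℝ), μ {ω | Z2 ω > z} = ENNReal.ofReal (Real.exp (-(π * lam2 * z ^ 2))))
    (hindep : IndepFun Z1 Z2 μ)
    (hm1 : Measurable Z1) (hm2 : Measurable Z2) :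
    μ {ω | P1 * (Z1 ω) ^ (-α) ≥ B * P2 * (Z2 ω) ^ (-α)} =
      ENNReal.ofReal (lam1 / (lam1 + lam2 * (B * P2 / P1) ^ (2 / α))) := by
  have hR1 : HasRayleighTail μ Z1 lam1 := hZ1
  have hR2 : HasRayleighTail μ Z2 lam2 := hZ2
  set k := B * P2 / P1
  have hk : 0 < k := by positivity
  set c := k ^ (-α⁻¹)
  have hc : 0 < c := rpow_pos_of_pos hk _
  have hevent : {ω | P1 * (Z1 ω) ^ (-α) ≥ B * P2 * (Z2 ω) ^ (-α)} =ᵐ[μ] {ω | Z1 ω ≤ c * Z2 ω} := by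
    filter_upwards [hR1.ae_pos hm1, hR2.ae_pos hm2] with ω h1 h2
    exact propext (mul_rpow_neg_le_mul_rpow_neg_iff hP1 (by positivity) h1 h2 (by linarith))
  have hinner : ∀ᵐ ω ∂μ, μ {ω' | Z1 ω' ≤ c * Z2 ω}
      = ENNReal.ofReal (1 - exp (-(π * lam1 * c ^ 2) * Z2 ω ^ 2)) := by
    filter_upwards [hR2.ae_pos hm2] with ω h2
    rw [hR1.measure_le hm1 (by positivity)]
    ring_nf
  have hcq : c ^ 2 * k ^ (2 / α) = 1 := by
    rw [← rpow_natCast, ← rpow_mul hk.le, ← rpow_add hk, Nat.cast_ofNat, neg_mul, inv_mul_eq_div,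
      neg_add_cancel, rpow_zero]
  have hcond : μ {ω | Z1 ω ≤ c * Z2 ω} = ∫⁻ ω, μ {ω' | Z1 ω' ≤ c * Z2 ω} ∂μ :=
    (hindep.comp measurable_id (measurable_const_mul c)).measure_preimage_eq_lintegral hm1
      (hm2.const_mul c) (measurableSet_le measurable_fst measurable_snd)
  rw [measure_congr hevent, hcond, lintegral_congr_ae hinner,
    hR2.lintegral_one_sub_exp_neg_mul_sq hm2 hlam2.le (by positivity),
    eq_inv_of_mul_eq_one_right hcq]
  congr 1
  field_simp
end

section
/- Let q(n) = (3.5^{3.5} Γ(n+3.5) (ρ)^{n−1}) / (Γ(3.5) (n−1)! (ρ + 3.5)^{n+3.5}) for integers n ≥ 1, with ρ > 0. Then Σ_{n=1}^∞ q(n) = 1 and Σ_{n=1}^∞ n·q(n) = 1 + (4.5/3.5)·ρ ≈ 1 + 1.28ρ. -/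
open Real MeasureTheory Set

lemma hasSum_exp_series (y : ℝ) :
    HasSum (fun n : ℕ => y ^ n / n.factorial) (Real.exp y) := by
  have h := NormedSpace.exp_series_hasSum_exp' (𝕂 := ℝ) y
  rw [Real.exp_eq_exp_ℝ]
  convert h using 2 with n
  · rfl
  rw [smul_eq_mul, div_eq_inv_mul]

lemma hasSum_Gamma_series {r x : ℝ} (hr : 0 < r) (hx0 : 0 ≤ x) (hx1 : x < 1) :
    HasSum (fun n : ℕ => Real.Gamma ((n : ℝ) + r) * x ^ n / n.factorial)
      ((1 / (1 - x)) ^ r * Real.Gamma r) := by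
  set f : ℕ → ℝ := fun n => Real.Gamma ((n : ℝ) + r) * x ^ n / n.factorial with hf
  have hc : 0 < 1 - x := by linarith
  have hfnn : ∀ n, 0 ≤ f n := by
    intro n
    have : 0 < (n : ℝ) + r := by positivity
    have := Real.Gamma_pos_of_pos this
    positivity
  set S : ℝ := (1 / (1 - x)) ^ r * Real.Gamma r with hS
  have hSnn : 0 ≤ S := by
    have := Real.Gamma_pos_of_pos hr
    positivity
  -- the ENNReal-valued claim
  have key : ∑' n : ℕ, ENNReal.ofReal (f n) = ENNReal.ofReal S := by
    -- step 1 : each term as a lintegral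
    have step1 : ∀ n : ℕ, ENNReal.ofReal (f n) =
        ∫⁻ t in Ioi (0:ℝ),
          ENNReal.ofReal (Real.exp (-t) * t ^ ((n : ℝ) + r - 1) * (x ^ n / n.factorial)) := by
      intro n
      have hnr : 0 < (n : ℝ) + r := by positivity
      have hint := Real.GammaIntegral_convergent hnr
      have hnn : (0:ℝ → ℝ) ≤ᵐ[volume.restrict (Ioi (0:ℝ))]
          fun t => Real.exp (-t) * t ^ ((n : ℝ) + r - 1) := by
        filter_upwards [ae_restrict_mem measurableSet_Ioi] with t ht
        have := Real.rpow_nonneg (le_of_lt ht) ((n : ℝ) + r - 1)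
        positivity
      have hGamma : ENNReal.ofReal (Real.Gamma ((n : ℝ) + r)) =
          ∫⁻ t in Ioi (0:ℝ), ENNReal.ofReal (Real.exp (-t) * t ^ ((n : ℝ) + r - 1)) := by
        rw [Real.Gamma_eq_integral hnr]
        exact ofReal_integral_eq_lintegral_ofReal hint hnn
      have hk : (0:ℝ) ≤ x ^ n / n.factorial := by positivity
      calc ENNReal.ofReal (f n)
          = ENNReal.ofReal (Real.Gamma ((n : ℝ) + r)) * ENNReal.ofReal (x ^ n / n.factorial) := by
            rw [hf, ← ENNReal.ofReal_mul (by positivity)]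
            ring_nf
        _ = (∫⁻ t in Ioi (0:ℝ), ENNReal.ofReal (Real.exp (-t) * t ^ ((n : ℝ) + r - 1)))
              * ENNReal.ofReal (x ^ n / n.factorial) := by rw [hGamma]
        _ = ∫⁻ t in Ioi (0:ℝ),
              ENNReal.ofReal (Real.exp (-t) * t ^ ((n : ℝ) + r - 1)) *
                ENNReal.ofReal (x ^ n / n.factorial) := by
            rw [lintegral_mul_const' _ _ ENNReal.ofReal_ne_top]
        _ = _ := by
            refine setLIntegral_congr_fun measurableSet_Ioi (fun t ht => ?_)
            have h1 : (0:ℝ) ≤ t ^ ((n : ℝ) + r - 1) := Real.rpow_nonneg (le_of_lt ht) _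
            rw [← ENNReal.ofReal_mul (by positivity)]
    -- step 2 : swap sum and integral
    have meas : ∀ n : ℕ, AEMeasurable (fun t : ℝ =>
        ENNReal.ofReal (Real.exp (-t) * t ^ ((n : ℝ) + r - 1) * (x ^ n / n.factorial)))
        (volume.restrict (Ioi (0:ℝ))) := by
      intro n
      have hcont : ContinuousOn (fun t : ℝ =>
          Real.exp (-t) * t ^ ((n : ℝ) + r - 1) * (x ^ n / n.factorial)) (Ioi 0) := by
        apply ContinuousOn.mul _ continuousOn_const
        exact ContinuousOn.mul (Continuous.continuousOn (by continuity))
          (ContinuousOn.rpow_const continuousOn_id fun t ht => Or.inl (ne_of_gt ht))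
      exact (ENNReal.continuous_ofReal.comp_continuousOn hcont).aemeasurable measurableSet_Ioi
    have step2 : ∑' n : ℕ, ENNReal.ofReal (f n) =
        ∫⁻ t in Ioi (0:ℝ), ∑' n : ℕ,
          ENNReal.ofReal (Real.exp (-t) * t ^ ((n : ℝ) + r - 1) * (x ^ n / n.factorial)) := by
      simp_rw [step1]
      exact (lintegral_tsum meas).symm
    -- step 3 : pointwise evaluation of the sum for t > 0
    have step3 : ∀ t : ℝ, t ∈ Ioi (0:ℝ) →
        (∑' n : ℕ, ENNReal.ofReal (Real.exp (-t) * t ^ ((n : ℝ) + r - 1) * (x ^ n / n.factorial)))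
          = ENNReal.ofReal (t ^ (r - 1) * Real.exp (-((1 - x) * t))) := by
      intro t ht
      have ht0 : (0:ℝ) < t := ht
      have hterm : ∀ n : ℕ, Real.exp (-t) * t ^ ((n : ℝ) + r - 1) * (x ^ n / n.factorial)
          = (Real.exp (-t) * t ^ (r - 1)) * ((x * t) ^ n / n.factorial) := by
        intro n
        have : t ^ ((n : ℝ) + r - 1) = t ^ (n : ℕ) * t ^ (r - 1) := by
          rw [← Real.rpow_natCast t n, ← Real.rpow_add ht0]
          ring_nf
        rw [this, mul_pow]
        ring
      have hb : HasSum (fun n : ℕ => (Real.exp (-t) * t ^ (r - 1)) * ((x * t) ^ n / n.factorial))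
          ((Real.exp (-t) * t ^ (r - 1)) * Real.exp (x * t)) :=
        (hasSum_exp_series (x * t)).mul_left _
      have hbnn : ∀ n : ℕ, (0:ℝ) ≤ (Real.exp (-t) * t ^ (r - 1)) * ((x * t) ^ n / n.factorial) := by
        intro n
        have h1 : (0:ℝ) ≤ t ^ (r - 1) := Real.rpow_nonneg ht0.le _
        have h2 : (0:ℝ) ≤ x * t := mul_nonneg hx0 ht0.le
        positivity
      calc (∑' n : ℕ, ENNReal.ofReal (Real.exp (-t) * t ^ ((n : ℝ) + r - 1) * (x ^ n / n.factorial)))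
          = ∑' n : ℕ, ENNReal.ofReal
              ((Real.exp (-t) * t ^ (r - 1)) * ((x * t) ^ n / n.factorial)) := by
            exact tsum_congr fun n => by rw [hterm n]
        _ = ENNReal.ofReal ((Real.exp (-t) * t ^ (r - 1)) * Real.exp (x * t)) := by
            rw [← ENNReal.ofReal_tsum_of_nonneg hbnn hb.summable, hb.tsum_eq]
        _ = ENNReal.ofReal (t ^ (r - 1) * Real.exp (-((1 - x) * t))) := by
            rw [mul_comm (Real.exp (-t)), mul_assoc, ← Real.exp_add]
            ring_nf
    -- step 4 : evaluate the remaining integral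
    have hint2 : IntegrableOn (fun t : ℝ => t ^ (r - 1) * Real.exp (-((1 - x) * t)))
        (Ioi (0:ℝ)) := by
      have := integrableOn_rpow_mul_exp_neg_mul_rpow (p := 1) (s := r - 1) (b := 1 - x)
        (by linarith) zero_lt_one hc
      refine this.congr_fun (fun t ht => ?_) measurableSet_Ioi
      simp only [Real.rpow_one]
      ring_nf
    have step4 : (∫⁻ t in Ioi (0:ℝ), ENNReal.ofReal (t ^ (r - 1) * Real.exp (-((1 - x) * t))))
        = ENNReal.ofReal S := by
      rw [← ofReal_integral_eq_lintegral_ofReal hint2]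
      · rw [integral_rpow_mul_exp_neg_mul_Ioi hr hc]
      · filter_upwards [ae_restrict_mem measurableSet_Ioi] with t ht
        have h1 : (0:ℝ) ≤ t ^ (r - 1) := Real.rpow_nonneg (le_of_lt ht) _
        positivity
    rw [step2, setLIntegral_congr_fun measurableSet_Ioi step3, step4]
  -- back to real numbers
  have hsummable : Summable f := by
    have hne : (∑' n : ℕ, ENNReal.ofReal (f n)) ≠ ⊤ := by
      rw [key]; exact ENNReal.ofReal_ne_top
    have := ENNReal.summable_toReal hne
    refine this.congr fun n => ?_
    rw [ENNReal.toReal_ofReal (hfnn n)]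
  have htsum : ∑' n, f n = S := by
    have h1 : ENNReal.ofReal (∑' n, f n) = ENNReal.ofReal S := by
      rw [ENNReal.ofReal_tsum_of_nonneg hfnn hsummable, key]
    exact (ENNReal.ofReal_eq_ofReal_iff (tsum_nonneg hfnn) hSnn).mp h1
  exact htsum ▸ hsummable.hasSum

/-- **The size-biased load p.m.f. and its mean.**
For `ρ > 0`, the size-biased load p.m.f.
`q(n) = 3.5^{3.5} Γ(n+3.5) ρ^{n−1} / (Γ(3.5) (n−1)! (ρ+3.5)^{n+3.5})`, `n ≥ 1`,
satisfies `∑_{n=1}^∞ q(n) = 1` and its exact mean is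
`∑_{n=1}^∞ n q(n) = 1 + (4.5/3.5) ρ = 1 + (9/7) ρ ≈ 1 + 1.28 ρ`. -/
theorem load_pmf_sum_and_mean (ρ : ℝ) (hρ : 0 < ρ)
    (q : ℕ → ℝ)
    (hq : ∀ n : ℕ, 1 ≤ n → q n =
      (3.5:ℝ) ^ (3.5:ℝ) * Real.Gamma ((n:ℝ) + 3.5) * ρ ^ (n - 1)
        / (Real.Gamma 3.5 * (n - 1).factorial * (ρ + 3.5) ^ ((n:ℝ) + 3.5))) :
    (∑' n : ℕ, q (n + 1)) = 1 ∧
    (∑' n : ℕ, ((n:ℝ) + 1) * q (n + 1)) = 1 + (9 / 7) * ρ := by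
  set s : ℝ := ρ + 3.5 with hsdef
  have hs : (0:ℝ) < s := by simp only [hsdef]; linarith
  set x : ℝ := ρ / s with hxdef
  have hx0 : (0:ℝ) ≤ x := div_nonneg hρ.le hs.le
  have hx1 : x < 1 := (div_lt_one hs).mpr (by simp only [hsdef]; linarith)
  have h1mx : 1 - x = 3.5 / s := by
    field_simp [hxdef]
    rw [hxdef, hsdef]; field_simp; ring
  have hG : (0:ℝ) < Real.Gamma 3.5 := Real.Gamma_pos_of_pos (by norm_num)
  set K : ℝ := (3.5:ℝ) ^ (3.5:ℝ) / (Real.Gamma 3.5 * s ^ (4.5:ℝ)) with hKdef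
  have hs45 : (0:ℝ) < s ^ (4.5:ℝ) := Real.rpow_pos_of_pos hs _
  have hs55 : (0:ℝ) < s ^ (5.5:ℝ) := Real.rpow_pos_of_pos hs _
  have h355 : ((3.5:ℝ)) ^ (4.5:ℝ) = (3.5:ℝ) ^ (3.5:ℝ) * 3.5 := by
    rw [show (4.5:ℝ) = 3.5 + 1 by norm_num, Real.rpow_add (by norm_num), Real.rpow_one]
  have h3555 : ((3.5:ℝ)) ^ (5.5:ℝ) = (3.5:ℝ) ^ (4.5:ℝ) * 3.5 := by
    rw [show (5.5:ℝ) = 4.5 + 1 by norm_num, Real.rpow_add (by norm_num), Real.rpow_one]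
  have hss : s ^ (5.5:ℝ) = s ^ (4.5:ℝ) * s := by
    rw [show (5.5:ℝ) = 4.5 + 1 by norm_num, Real.rpow_add hs, Real.rpow_one]
  have hG45 : Real.Gamma 4.5 = 3.5 * Real.Gamma 3.5 := by
    rw [show (4.5:ℝ) = 3.5 + 1 by norm_num, Real.Gamma_add_one (by norm_num)]
  have hG55 : Real.Gamma 5.5 = 4.5 * (3.5 * Real.Gamma 3.5) := by
    rw [show (5.5:ℝ) = 4.5 + 1 by norm_num, Real.Gamma_add_one (by norm_num), hG45]
  have hinv : ∀ y : ℝ, (1 / (1 - x)) ^ y = s ^ y / (3.5:ℝ) ^ y := by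
    intro y
    rw [h1mx, one_div_div, Real.div_rpow hs.le (by norm_num)]
  -- rewrite q (n+1)
  have hq' : ∀ n : ℕ, q (n + 1) =
      K * (Real.Gamma ((n:ℝ) + 4.5) * x ^ n / n.factorial) := by
    intro n
    rw [hq (n + 1) (by omega)]
    have e1 : ((n + 1 : ℕ) : ℝ) + 3.5 = (n : ℝ) + 4.5 := by push_cast; ring
    have e2 : (n + 1) - 1 = n := by omega
    rw [e1, e2]
    have e3 : s ^ ((n : ℝ) + 4.5) = s ^ (n : ℕ) * s ^ (4.5:ℝ) := by
      rw [show ((n:ℝ) + 4.5) = (n:ℕ) + (4.5:ℝ) by push_cast; ring,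
        Real.rpow_add hs, Real.rpow_natCast]
    rw [e3, hKdef, hxdef, div_pow]
    have hsn : (0:ℝ) < s ^ (n:ℕ) := pow_pos hs n
    have hfn : (0:ℝ) < (n.factorial : ℝ) := by positivity
    field_simp
  -- first sum
  have hsum1 : HasSum (fun n : ℕ => q (n + 1)) 1 := by
    have h1 := (hasSum_Gamma_series (r := 4.5) (x := x) (by norm_num) hx0 hx1).mul_left K
    have heq : (fun n : ℕ => K * (Real.Gamma ((n:ℝ) + 4.5) * x ^ n / n.factorial))
        = fun n : ℕ => q (n + 1) := by
      funext n; rw [hq' n]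
    rw [heq] at h1
    convert h1 using 1
    · rfl
    rw [hinv, hKdef, hG45, h355]
    field_simp
  -- second sum : ∑ n * q (n+1)
  have hsum2 : HasSum (fun n : ℕ => (n:ℝ) * q (n + 1)) ((9 / 7) * ρ) := by
    have h2 := (hasSum_Gamma_series (r := 5.5) (x := x) (by norm_num) hx0 hx1).mul_left (K * x)
    have hshift : ∀ n : ℕ, ((n + 1 : ℕ):ℝ) * q ((n + 1) + 1)
        = (K * x) * (Real.Gamma ((n:ℝ) + 5.5) * x ^ n / n.factorial) := by
      intro n
      rw [hq' (n + 1)]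
      have e1 : (((n + 1 : ℕ)):ℝ) + 4.5 = (n : ℝ) + 5.5 := by push_cast; ring
      rw [e1, pow_succ, Nat.factorial_succ]
      have hfn : (0:ℝ) < (n.factorial : ℝ) := by positivity
      have hn1 : (0:ℝ) < ((n:ℝ) + 1) := by positivity
      push_cast
      field_simp
    have heq2 : (fun n : ℕ => ((n + 1 : ℕ):ℝ) * q ((n + 1) + 1))
        = fun n : ℕ => (K * x) * (Real.Gamma ((n:ℝ) + 5.5) * x ^ n / n.factorial) :=
      funext hshift
    have h2' : HasSum (fun n : ℕ => ((n + 1 : ℕ):ℝ) * q ((n + 1) + 1))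
        ((K * x) * ((1 / (1 - x)) ^ (5.5:ℝ) * Real.Gamma 5.5)) := by
      rw [heq2]; exact h2
    have h3 := (hasSum_nat_add_iff (f := fun n : ℕ => (n:ℝ) * q (n + 1)) 1).mp h2'
    simp only [Finset.range_one, Finset.sum_singleton, Nat.cast_zero, zero_mul, add_zero] at h3
    convert h3 using 1
    · rfl
    rw [hinv, hKdef, hxdef, hG55, h3555, h355, hss]
    field_simp
    ring
  refine ⟨hsum1.tsum_eq, ?_⟩
  have heq3 : (fun n : ℕ => ((n:ℝ) + 1) * q (n + 1))
      = fun n : ℕ => q (n + 1) + (n:ℝ) * q (n + 1) := by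
    funext n; ring
  have hsum3 : HasSum (fun n : ℕ => ((n:ℝ) + 1) * q (n + 1)) (1 + (9 / 7) * ρ) := by
    rw [heq3]; exact hsum1.add hsum2
  exact hsum3.tsum_eq
end

section
/- Let g: (0,∞) → ℝ and suppose for integers a < b < c and a parameter U ∈ {a, …, c} that the difference Δ(U, τ) = g(U, τ) − g(U−1, τ) satisfies: Δ(U, τ) = Θ(τ^{m}) with positive leading coefficient for all U ≤ b as τ → 0⁺ except possibly at U = b where the sign of the τ^m coefficient is ambiguous, and Δ(U, τ) = Θ(τ^{c−U'}) with negative leading coefficient for all U > b (where c − U' < m for those U). Then there exists τ₀ > 0 such that for all 0 < τ < τ₀, the maximizer U*(τ) = argmax_U g(U, τ) lies in {b−1, b}. -/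
open Filter Topology

/-- **Asymptotic location of the optimal IN design parameter.**
Let `g (U, τ)` be an objective defined for integers `U ∈ {a,…,c}` (`a < b < c`) and
`τ > 0`, with differences `Δ(U,τ) = g U τ − g (U−1) τ`.  Assume:
* for `a < U < b`, `Δ(U,τ) = Θ(τ^m)` with positive leading coefficient as `τ → 0⁺`;
* at `U = b`, `Δ(b,τ)/τ^m` converges (the sign of the coefficient is ambiguous);
* for `b < U ≤ c`, `Δ(U,τ) = Θ(τ^{e U})` with negative leading coefficient, where
  `e U < m` for those `U`.
Then there is `τ₀ > 0` such that for all `0 < τ < τ₀` every maximizer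
`U* = argmax_{a ≤ U ≤ c} g U τ` lies in `{b−1, b}`. -/
theorem optimal_design_parameter_asymptotics
    (g : ℤ → ℝ → ℝ) (a b c : ℤ) (hab : a < b) (hbc : b < c)
    (m : ℕ) (e : ℤ → ℕ)
    (hgain : ∀ U : ℤ, a < U → U < b → ∃ C : ℝ, 0 < C ∧
      Tendsto (fun τ : ℝ => (g U τ - g (U - 1) τ) / τ ^ m) (𝓝[>] 0) (𝓝 C))
    (hambiguous : ∃ C : ℝ,
      Tendsto (fun τ : ℝ => (g b τ - g (b - 1) τ) / τ ^ m) (𝓝[>] 0) (𝓝 C))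
    (hpenalty : ∀ U : ℤ, b < U → U ≤ c → ∃ C : ℝ, C < 0 ∧
      Tendsto (fun τ : ℝ => (g U τ - g (U - 1) τ) / τ ^ (e U)) (𝓝[>] 0) (𝓝 C))
    (he : ∀ U : ℤ, b < U → U ≤ c → e U < m) :
    ∃ τ₀ : ℝ, 0 < τ₀ ∧ ∀ τ : ℝ, 0 < τ → τ < τ₀ →
      ∀ Ustar : ℤ, a ≤ Ustar → Ustar ≤ c →
        (∀ U : ℤ, a ≤ U → U ≤ c → g U τ ≤ g Ustar τ) →
        Ustar = b - 1 ∨ Ustar = b := by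
  -- For each relevant U, the difference is eventually positive / negative.
  have hpos : ∀ U ∈ Finset.Ioo a b,
      ∀ᶠ τ in 𝓝[>] (0:ℝ), 0 < g U τ - g (U - 1) τ := by
    intro U hU
    rw [Finset.mem_Ioo] at hU
    obtain ⟨C, hC, hT⟩ := hgain U hU.1 hU.2
    have h1 : ∀ᶠ τ in 𝓝[>] (0:ℝ), 0 < (g U τ - g (U - 1) τ) / τ ^ m :=
      hT.eventually (eventually_gt_nhds hC)
    have h2 : ∀ᶠ τ in 𝓝[>] (0:ℝ), 0 < τ := self_mem_nhdsWithin
    filter_upwards [h1, h2] with τ hτ1 hτ2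
    have hpow : (0:ℝ) < τ ^ m := pow_pos hτ2 m
    have := mul_pos hτ1 hpow
    rwa [div_mul_cancel₀ _ (ne_of_gt hpow)] at this
  have hneg : ∀ U ∈ Finset.Ioc b c,
      ∀ᶠ τ in 𝓝[>] (0:ℝ), g U τ - g (U - 1) τ < 0 := by
    intro U hU
    rw [Finset.mem_Ioc] at hU
    obtain ⟨C, hC, hT⟩ := hpenalty U hU.1 hU.2
    have h1 : ∀ᶠ τ in 𝓝[>] (0:ℝ), (g U τ - g (U - 1) τ) / τ ^ (e U) < 0 :=
      hT.eventually (eventually_lt_nhds hC)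
    have h2 : ∀ᶠ τ in 𝓝[>] (0:ℝ), 0 < τ := self_mem_nhdsWithin
    filter_upwards [h1, h2] with τ hτ1 hτ2
    have hpow : (0:ℝ) < τ ^ (e U) := pow_pos hτ2 (e U)
    have := mul_neg_of_neg_of_pos hτ1 hpow
    rwa [div_mul_cancel₀ _ (ne_of_gt hpow)] at this
  have key : ∀ᶠ τ in 𝓝[>] (0:ℝ),
      (∀ U ∈ Finset.Ioo a b, 0 < g U τ - g (U - 1) τ) ∧
      (∀ U ∈ Finset.Ioc b c, g U τ - g (U - 1) τ < 0) := by
    refine Eventually.and ?_ ?_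
    · exact (Filter.eventually_all_finset _).2 hpos
    · exact (Filter.eventually_all_finset _).2 hneg
  rw [eventually_nhdsWithin_iff, Metric.eventually_nhds_iff] at key
  obtain ⟨ε, hε, hkey⟩ := key
  refine ⟨ε, hε, ?_⟩
  intro τ hτ0 hτε Ustar haU hUc hmax
  have hτ : (∀ U ∈ Finset.Ioo a b, 0 < g U τ - g (U - 1) τ) ∧
      (∀ U ∈ Finset.Ioc b c, g U τ - g (U - 1) τ < 0) := by
    apply hkey (by simp [abs_of_pos hτ0, hτε] : dist τ 0 < ε) hτ0
  by_contra hcon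
  push_neg at hcon
  obtain ⟨h1, h2⟩ := hcon
  rcases lt_or_gt_of_ne h2 with hlt | hgt
  · -- Ustar < b, Ustar ≠ b - 1, so Ustar + 1 < b
    have hUb : Ustar + 1 < b := by omega
    have hmem : Ustar + 1 ∈ Finset.Ioo a b := by
      rw [Finset.mem_Ioo]; omega
    have := hτ.1 _ hmem
    simp only [add_sub_cancel_right] at this
    have hle := hmax (Ustar + 1) (by omega) (by omega)
    linarith
  · -- Ustar > b
    have hmem : Ustar ∈ Finset.Ioc b c := by
      rw [Finset.mem_Ioc]; exact ⟨hgt, hUc⟩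
    have := hτ.2 _ hmem
    have hle := hmax (Ustar - 1) (by omega) (by omega)
    linarith
end
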